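/- arXiv:2305.12023 — 2 statements merged into one kernel-verified Lean document; each statement's English description precedes it below -/
import Mathlib

section
/- For every finite simple graph G with at least one vertex, the stretch-width of G is at most the component twin-width of G minus 1, i.e., stw(G) ≤ ctww(G) − 1. -/
open Finset

noncomputable section
open scoped Classical
set_option linter.unusedSectionVars false
set_option linter.unusedVariables false

namespace StretchPaper

/-! ### Partitions, red graphs, component twin-width and stretch-width of graphs -/

variable {V : Type} [Fintype V] [DecidableEq V]

/-- Two parts are inhomogeneous in `G`. -/
def Inhomog (G : SimpleGraph V) (X Y : Finset V) : Prop :=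
  (∃ x ∈ X, ∃ y ∈ Y, G.Adj x y) ∧ (∃ x ∈ X, ∃ y ∈ Y, ¬ G.Adj x y)

lemma Inhomog.symm {G : SimpleGraph V} {X Y : Finset V} (h : Inhomog G X Y) :
    Inhomog G Y X := by
  obtain ⟨⟨x, hx, y, hy, hxy⟩, ⟨x', hx', y', hy', hxy'⟩⟩ := h
  exact ⟨⟨y, hy, x, hx, hxy.symm⟩, ⟨y', hy', x', hx', fun hc => hxy' hc.symm⟩⟩

/-- `P` is obtained from `Q` by merging two parts. -/
def MergeStep (Q P : Finpartition (Finset.univ : Finset V)) : Prop :=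
  ∃ A ∈ Q.parts, ∃ B ∈ Q.parts, A ≠ B ∧
    P.parts = insert (A ∪ B) ((Q.parts.erase A).erase B)

/-- `l = [P_n, …, P_1]` is a partition sequence: it starts at the partition into
singletons, ends at the partition with the single part `univ`, and each partition is
obtained from the previous one by merging two parts. -/
def IsPartitionSeq (l : List (Finpartition (Finset.univ : Finset V))) : Prop :=
  (∃ P, l.head? = some P ∧ ∀ X ∈ P.parts, X.card = 1) ∧
  (∃ P, l.getLast? = some P ∧ P.parts = {Finset.univ}) ∧
  l.Chain' MergeStep

/-- The red graph of a partition: parts are vertices, inhomogeneous pairs are edges. -/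
def redGraph (G : SimpleGraph V) (P : Finpartition (Finset.univ : Finset V)) :
    SimpleGraph {X : Finset V // X ∈ P.parts} where
  Adj X Y := X ≠ Y ∧ Inhomog G X.1 Y.1
  symm := ⟨fun X Y h => ⟨h.1.symm, h.2.symm⟩⟩
  loopless := ⟨fun X h => h.1 rfl⟩

/-- The largest number of parts contained in a single connected component of the red graph. -/
def maxRedComponentSize (G : SimpleGraph V) (P : Finpartition (Finset.univ : Finset V)) : ℕ :=
  Finset.univ.sup fun X : {X : Finset V // X ∈ P.parts} =>
    (Finset.univ.filter fun Y => (redGraph G P).Reachable X Y).card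

/-- Component twin-width. -/
def ctww (G : SimpleGraph V) : ℕ :=
  sInf { k | ∃ l, IsPartitionSeq l ∧ ∀ P ∈ l, maxRedComponentSize G P ≤ k }

section Ord
variable [LinearOrder V]

/-- The convex closure (span) of a set of vertices along the linear order. -/
def conv (X : Finset V) : Finset V :=
  Finset.univ.filter fun v => (∃ a ∈ X, a ≤ v) ∧ ∃ b ∈ X, v ≤ b

/-- Two sets are in conflict if their spans intersect. -/
def Conflict (X Y : Finset V) : Prop := (conv X ∩ conv Y).Nonempty

/-- The union of a part `X` and of all parts adjacent to `X` in the red graph. -/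
def redClosedNbhd (G : SimpleGraph V) (P : Finpartition (Finset.univ : Finset V))
    (X : Finset V) : Finset V :=
  X ∪ (P.parts.filter fun Y => Y ≠ X ∧ Inhomog G X Y).biUnion id

/-- The stretch of a part `X` of `P`: the number of parts `Y ≠ X` that conflict with the
union of `X` and all parts adjacent to `X` in the red graph (i.e. that interfere with `X`). -/
def stretchPart (G : SimpleGraph V) (P : Finpartition (Finset.univ : Finset V))
    (X : Finset V) : ℕ :=
  ((P.parts.erase X).filter fun Y => Conflict Y (redClosedNbhd G P X)).card

/-- The stretch of a partition: the maximum stretch of a part. -/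
def stretchPartition (G : SimpleGraph V) (P : Finpartition (Finset.univ : Finset V)) : ℕ :=
  P.parts.sup fun X => stretchPart G P X

/-- Stretch-width of the ordered graph `(G, ≤)`. -/
def stwOrd (G : SimpleGraph V) : ℕ :=
  sInf { k | ∃ l, IsPartitionSeq l ∧ ∀ P ∈ l, stretchPartition G P ≤ k }

end Ord

/-- Stretch-width of `G`: minimum over all linear orders on the vertices. -/
def stw (G : SimpleGraph V) : ℕ :=
  sInf (Set.range fun L : LinearOrder V => @stwOrd V _ _ L G)


/-! ### Symmetric 0,1-matrices: stretch-width and divisions -/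

variable {n : ℕ}

/-- The zone `R × C` of `M` is non-constant. -/
def NonConstZone (M : Fin n → Fin n → Bool) (R C : Finset (Fin n)) : Prop :=
  ∃ r ∈ R, ∃ r' ∈ R, ∃ c ∈ C, ∃ c' ∈ C, M r c ≠ M r' c'

/-- `D_R`: the union of `R` and of all parts `C` of `P` with `R × C` non-constant. -/
def matBag (M : Fin n → Fin n → Bool) (P : Finpartition (Finset.univ : Finset (Fin n)))
    (R : Finset (Fin n)) : Finset (Fin n) :=
  R ∪ (P.parts.filter fun C => NonConstZone M R C).biUnion id

/-- The stretch value of a part `R` of `P`. -/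
def matStretchPart (M : Fin n → Fin n → Bool) (P : Finpartition (Finset.univ : Finset (Fin n)))
    (R : Finset (Fin n)) : ℕ :=
  (P.parts.filter fun Q => Conflict Q (matBag M P R)).card

/-- The stretch value of a partition. -/
def matStretch (M : Fin n → Fin n → Bool)
    (P : Finpartition (Finset.univ : Finset (Fin n))) : ℕ :=
  P.parts.sup fun R => matStretchPart M P R

/-- Stretch-width of a symmetric 0,1-matrix. -/
def stwM (M : Fin n → Fin n → Bool) : ℕ :=
  sInf { k | ∃ l : List (Finpartition (Finset.univ : Finset (Fin n))),
    IsPartitionSeq l ∧ ∀ P ∈ l, matStretch M P ≤ k }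

/-- A symmetric division `(I_1, …, I_p)` of `[n]` into consecutive nonempty intervals;
out-of-range indices denote the empty set. -/
structure SymDiv (n : ℕ) where
  p : ℕ
  I : ℤ → Finset (Fin n)
  out_empty : ∀ j : ℤ, (j < 1 ∨ (p : ℤ) < j) → I j = ∅
  in_nonempty : ∀ j : ℤ, 1 ≤ j → j ≤ (p : ℤ) → (I j).Nonempty
  interval : ∀ j : ℤ, ∀ a ∈ I j, ∀ c ∈ I j, ∀ b : Fin n, a ≤ b → b ≤ c → b ∈ I j
  increasing : ∀ j : ℤ, ∀ a ∈ I j, ∀ b ∈ I (j + 1), a < b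
  covers : ∀ v : Fin n, ∃ j : ℤ, v ∈ I j

/-- The restriction of row `r` of `M` to the columns outside `U`. -/
def rowRestr (M : Fin n → Fin n → Bool) (U : Finset (Fin n)) (r : Fin n) :
    Fin n → Option Bool :=
  fun c => if c ∈ U then none else some (M r c)

/-- The union `I_j ∪ I_{j+1} ∪ … ∪ I_{j+k-1}`. -/
def window (D : SymDiv n) (j : ℤ) (k : ℕ) : Finset (Fin n) :=
  (Finset.Icc j (j + (k : ℤ) - 1)).biUnion D.I

/-- The part `I_i` of `D` is `k`-wide. -/
def WidePart (M : Fin n → Fin n → Bool) (D : SymDiv n) (k : ℕ) (i : ℤ) : Prop :=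
  ∀ j : ℤ, j ≤ i → i ≤ j + (k : ℤ) - 1 →
    k ≤ ((D.I i).image (rowRestr M (window D j k))).card

/-- The division `D` is `k`-wide. -/
def WideDiv (M : Fin n → Fin n → Bool) (D : SymDiv n) (k : ℕ) : Prop :=
  ∀ i : ℤ, 1 ≤ i → i ≤ (D.p : ℤ) → WidePart M D k i

/-- The division `D` is `k`-diagonal. -/
def DiagDiv (M : Fin n → Fin n → Bool) (D : SymDiv n) (k : ℕ) : Prop :=
  ∀ i : ℤ, 1 ≤ i → i ≤ (D.p : ℤ) → ¬ WidePart M D k i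

/-- `D` is obtained from `E` by merging two consecutive intervals. -/
def DivMerge (E D : SymDiv n) : Prop :=
  D.p + 1 = E.p ∧ ∃ m : ℤ, 1 ≤ m ∧ m < (E.p : ℤ) ∧
    (∀ j : ℤ, j < m → D.I j = E.I j) ∧
    D.I m = E.I m ∪ E.I (m + 1) ∧
    (∀ j : ℤ, m < j → D.I j = E.I (j + 1))

/-- `l = [D_n, …, D_1]` is a sequence of symmetric divisions: from the division into
`n` singletons to the division with one part, merging two consecutive intervals at each step. -/
def IsDivSeq (l : List (SymDiv n)) : Prop :=
  (∃ D, l.head? = some D ∧ D.p = n) ∧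
  (∃ D, l.getLast? = some D ∧ D.p = 1) ∧
  l.Chain' DivMerge


/-! ### Ordered graphs, crossing edges, overlap graphs -/

section Overlap
variable {α : Type} [LinearOrder α]

/-- The left (smaller) endpoint of an edge. -/
def eL (e : Sym2 α) : α := Sym2.lift ⟨fun a b => min a b, fun a b => min_comm a b⟩ e

/-- The right (larger) endpoint of an edge. -/
def eR (e : Sym2 α) : α := Sym2.lift ⟨fun a b => max a b, fun a b => max_comm a b⟩ e

/-- Two edges cross: `L(e) ≺ L(f) ≺ R(e) ≺ R(f)` or `L(f) ≺ L(e) ≺ R(f) ≺ R(e)`. -/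
def Cross (e f : Sym2 α) : Prop :=
  (eL e < eL f ∧ eL f < eR e ∧ eR e < eR f) ∨
  (eL f < eL e ∧ eL e < eR f ∧ eR f < eR e)

/-- The overlap graph of `(G, ≤)` has a `K_{t,t}` subgraph: two disjoint sets of `t` edges
of `G` each, such that every edge of one set crosses every edge of the other. -/
def OvHasKtt (G : SimpleGraph α) (t : ℕ) : Prop :=
  ∃ A B : Finset (Sym2 α), ↑A ⊆ G.edgeSet ∧ ↑B ⊆ G.edgeSet ∧ Disjoint A B ∧
    A.card = t ∧ B.card = t ∧ ∀ e ∈ A, ∀ f ∈ B, Cross e f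

variable [Fintype α]

/-- The interior of an edge: the vertices strictly between its endpoints. -/
def edgeInterior (e : Sym2 α) : Finset α :=
  Finset.univ.filter fun x => eL e < x ∧ x < eR e

/-- The length of an edge: the number of vertices `x` with `L(e) ≺ x ⪯ R(e)`. -/
def edgeLen (e : Sym2 α) : ℕ := (Finset.univ.filter fun x => eL e < x ∧ x ≤ eR e).card

/-- The maximum length of an edge of `S` (0 if `S` is empty). -/
def lenSup (S : Finset (Sym2 α)) : ℕ := S.sup edgeLen

/-- A rainbow: a set of edges of `G` whose interiors are pairwise nested. -/
def IsRainbow (G : SimpleGraph α) (S : Finset (Sym2 α)) : Prop :=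
  ↑S ⊆ G.edgeSet ∧
  ∀ e ∈ S, ∀ f ∈ S, edgeInterior e ⊆ edgeInterior f ∨ edgeInterior f ⊆ edgeInterior e

/-- A rainbow over the vertex `v`. -/
def IsRainbowOver (G : SimpleGraph α) (S : Finset (Sym2 α)) (v : α) : Prop :=
  IsRainbow G S ∧ ∀ e ∈ S, eL e < v ∧ v < eR e

/-- A maximum rainbow over `v`. -/
def IsMaxRainbowOver (G : SimpleGraph α) (S : Finset (Sym2 α)) (v : α) : Prop :=
  IsRainbowOver G S v ∧ ∀ S' : Finset (Sym2 α), IsRainbowOver G S' v → S'.card ≤ S.card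

end Overlap

/-! ### Balanced separators and tree-decompositions -/

section Sep
variable {V : Type} [Fintype V] [DecidableEq V]

/-- `C` is a `c`-balanced separator of `G`. -/
def IsBalancedSeparator (G : SimpleGraph V) (c : ℝ) (C : Finset V) : Prop :=
  ∃ A B : Finset V, Disjoint A B ∧ A ∪ B = Finset.univ \ C ∧
    (∀ a ∈ A, ∀ b ∈ B, ¬ G.Adj a b) ∧
    (A.card : ℝ) ≤ (1 - c) * (Fintype.card V) ∧
    (B.card : ℝ) ≤ (1 - c) * (Fintype.card V)

/-- `(T, β)` is a tree-decomposition of `G`. -/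
def IsTreeDecomp (G : SimpleGraph V) {m : ℕ} (T : SimpleGraph (Fin m))
    (β : Fin m → Finset V) : Prop :=
  T.Connected ∧ T.IsAcyclic ∧
  (∀ v : V, ∃ t, v ∈ β t) ∧
  (∀ u v : V, G.Adj u v → ∃ t, u ∈ β t ∧ v ∈ β t) ∧
  (∀ v : V, (T.induce {t | v ∈ β t}).Connected)

/-- Treewidth: the minimum width of a tree-decomposition of `G`. -/
def treewidth (G : SimpleGraph V) : ℕ :=
  sInf { k | ∃ (m : ℕ) (T : SimpleGraph (Fin m)) (β : Fin m → Finset V),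
    IsTreeDecomp G T β ∧ (Finset.univ.sup fun t => (β t).card) - 1 ≤ k }

end Sep


/-! ### Subdivisions -/

/-- The internal vertices of a walk (its support minus the two endpoints). -/
def walkInternal {W : Type} {H : SimpleGraph W} {a b : W} (p : H.Walk a b) : List W :=
  p.support.tail.dropLast

/-- `H` is obtained from `G` by subdividing every edge at least `s` times. -/
def IsSubdivisionGE {V W : Type} (G : SimpleGraph V) (H : SimpleGraph W) (s : ℕ) : Prop :=
  ∃ (φ : V ↪ W) (p : ∀ u v : V, G.Adj u v → H.Walk (φ u) (φ v)),
    (∀ u v huv, (p u v huv).IsPath) ∧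
    (∀ u v huv, s + 1 ≤ (p u v huv).length) ∧
    (∀ u v huv, p u v huv = (p v u huv.symm).reverse) ∧
    (∀ u v huv, ∀ x ∈ walkInternal (p u v huv), x ∉ Set.range φ) ∧
    (∀ u v huv, ∀ u' v' h', s(u, v) ≠ s(u', v') →
      ∀ x ∈ walkInternal (p u v huv), x ∉ walkInternal (p u' v' h')) ∧
    (∀ x : W, x ∈ Set.range φ ∨ ∃ u v huv, x ∈ walkInternal (p u v huv)) ∧
    (∀ e ∈ H.edgeSet, ∃ u v huv, e ∈ (p u v huv).edges)

/-- Subdividing the edge `uv` of `G` once: the new vertex is `none : Option V`. -/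
def subdivideOnce {V : Type} (G : SimpleGraph V) (u v : V) : SimpleGraph (Option V) where
  Adj x y :=
    match x, y with
    | some a, some b => G.Adj a b ∧ s(a, b) ≠ s(u, v)
    | some a, none => a = u ∨ a = v
    | none, some b => b = u ∨ b = v
    | none, none => False
  symm := by
    constructor
    rintro (_ | a) (_ | b) h
    · exact h
    · exact h
    · exact h
    · exact ⟨h.1.symm, by rw [Sym2.eq_swap]; exact h.2⟩
  loopless := by
    constructor
    rintro (_ | a) h
    · exact h
    · exact G.irrefl h.1

/-! ### Flattening (iterated subdivisions) -/

/-- The number of vertices strictly between `u` and `v`. -/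
def interiorCount {V : Type} [Fintype V] [LinearOrder V] (u v : V) : ℕ :=
  (Finset.univ.filter fun x => u < x ∧ x < v).card

/-- The ordered graph `H` is obtained from `(G, ≤)` by flattening the edge `uv`, via the
order-embedding `φ` of old vertices and the new vertices `w 0, …, w h` interleaved with
the vertices between `u` and `v`. -/
def IsFlattenStepWith {V W : Type} [Fintype V] [LinearOrder V] [Fintype W] [LinearOrder W]
    (G : SimpleGraph V) (u v : V) (H : SimpleGraph W) (φ : V → W) (w : ℕ → W) : Prop :=
  G.Adj u v ∧ u < v ∧ StrictMono φ ∧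
  (∀ x : W, (∃ a : V, x = φ a) ∨ ∃ i ≤ interiorCount u v, x = w i) ∧
  (∀ a : V, ∀ i ≤ interiorCount u v, φ a ≠ w i) ∧
  (∀ i ≤ interiorCount u v,
    (Finset.univ.filter fun x => u ≤ x ∧ x ≤ v ∧ φ x < w i).card = i + 1) ∧
  (∀ a b : W, H.Adj a b ↔
    ((∃ x y : V, G.Adj x y ∧ s(x, y) ≠ s(u, v) ∧ s(a, b) = s(φ x, φ y)) ∨
     s(a, b) = s(φ u, w 0) ∨
     (∃ i : ℕ, i + 1 ≤ interiorCount u v ∧ s(a, b) = s(w i, w (i + 1))) ∨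
     s(a, b) = s(w (interiorCount u v), φ v)))

/-! ### The graphs `A_3^h` -/

/-- The graph `A_3^h` on vertex set `{0, …, 3^h − 1}`: distinct `u, v` are adjacent iff
`|⌊u/3^l⌋ − ⌊v/3^l⌋| = 3` for some `l < h`. -/
def Agraph (h : ℕ) : SimpleGraph (Fin (3 ^ h)) where
  Adj u v := u ≠ v ∧ ∃ l < h,
    ((u : ℕ) / 3 ^ l = (v : ℕ) / 3 ^ l + 3 ∨ (v : ℕ) / 3 ^ l = (u : ℕ) / 3 ^ l + 3)
  symm := by
    constructor
    rintro u v ⟨hne, l, hl, hd⟩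
    exact ⟨hne.symm, l, hl, hd.symm⟩
  loopless := ⟨fun u h => h.1 rfl⟩

/-!
Take a partition sequence witnessing `ctww G`. Along the sequence the red components only ever
merge, so the components at all times form a laminar family, and there is a linear order of the
vertices in which every red component at every time is an interval. In that order a part
interfering with a part `X` meets the interval of the red component of `X`, hence belongs to that
component, so the stretch of `X` is less than the size of its red component.
-/

theorem _root_.Pi.eq_of_toColex_le_of_le {ι : Type*} {β : ι → Type*} [LinearOrder ι]
    [WellFoundedGT ι] [∀ i, LinearOrder (β i)] {a b c : ∀ i, β i} (hab : toColex a ≤ toColex b)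
    (hbc : toColex b ≤ toColex c) {i : ι} (hac : ∀ j ≥ i, a j = c j) :
    ∀ j ≥ i, a j = b j := by
  intro j
  induction j using WellFoundedGT.induction with
  | _ j ih =>
    intro hij
    have hab' : ∀ k > j, a k = b k := fun k hk => ih k hk (hij.trans hk.le)
    have hbc' : ∀ k > j, b k = c k := fun k hk => (hab' k hk).symm.trans (hac k (hij.trans hk.le))
    exact le_antisymm (Pi.apply_le_of_toColex hab hab')
      ((Pi.apply_le_of_toColex hbc hbc').trans_eq (hac j hij).symm)

/-- Order the elements by the colexicographic order of their tuples of class representatives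
(coarsest relation most significant), breaking ties arbitrarily. -/
theorem _root_.Setoid.exists_linearOrder_ordConnected {α ι : Type*} [Countable α]
    [LinearOrder ι] [WellFoundedGT ι] (s : ι → Setoid α) (hs : Monotone s) :
    ∃ _ : LinearOrder α, ∀ i a, {b | s i a b}.OrdConnected := by
  obtain ⟨e, he⟩ := Countable.exists_injective_nat α
  let rep (i : ι) (a : α) : ℕ := e (Quotient.mk (s i) a).out
  have rep_eq_iff {i : ι} {a b : α} : rep i a = rep i b ↔ s i a b := by
    simp only [rep, he.eq_iff, Quotient.out_inj, Quotient.eq]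
  let key (a : α) : Colex (ι → ℕ) ×ₗ ℕ := toLex (toColex (rep · a), e a)
  have hkey : Function.Injective key := fun a b h => he (congrArg (fun k => (ofLex k).2) h)
  let L : LinearOrder α := LinearOrder.lift' key hkey
  refine ⟨L, fun i a => ⟨fun b hb d hd c hc => ?_⟩⟩
  have hbd : ∀ j ≥ i, rep j b = rep j d := fun j hj =>
    rep_eq_iff.2 (Setoid.le_def.1 (hs hj) ((s i).trans ((s i).symm hb) hd))
  have hbc := Pi.eq_of_toColex_le_of_le (Prod.Lex.monotone_fst _ _ hc.1)
    (Prod.Lex.monotone_fst _ _ hc.2) hbd i le_rfl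
  exact (s i).trans hb (rep_eq_iff.1 hbc)

lemma Inhomog.mono {G : SimpleGraph V} {X X' Y Y' : Finset V} (h : Inhomog G X Y)
    (hX : X ⊆ X') (hY : Y ⊆ Y') : Inhomog G X' Y' := by
  obtain ⟨⟨x, hx, y, hy, hxy⟩, ⟨x', hx', y', hy', hxy'⟩⟩ := h
  exact ⟨⟨x, hX hx, y, hY hy, hxy⟩, ⟨x', hX hx', y', hY hy', hxy'⟩⟩

def partOf (P : Finpartition (univ : Finset V)) (v : V) : {X : Finset V // X ∈ P.parts} :=
  ⟨P.part v, P.part_mem.2 (mem_univ v)⟩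

lemma partOf_eq {P : Finpartition (univ : Finset V)} {X : Finset V} (hX : X ∈ P.parts) {v : V}
    (hv : v ∈ X) : partOf P v = ⟨X, hX⟩ :=
  Subtype.ext (P.part_eq_of_mem hX hv)

def redSetoid (G : SimpleGraph V) (P : Finpartition (univ : Finset V)) : Setoid V :=
  (redGraph G P).reachableSetoid.comap (partOf P)

lemma redSetoid_iff {G : SimpleGraph V} {P : Finpartition (univ : Finset V)} {X Y : Finset V}
    (hX : X ∈ P.parts) (hY : Y ∈ P.parts) {v w : V} (hv : v ∈ X) (hw : w ∈ Y) :
    redSetoid G P v w ↔ (redGraph G P).Reachable ⟨X, hX⟩ ⟨Y, hY⟩ := by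
  rw [redSetoid, Setoid.comap_rel, partOf_eq hX hv, partOf_eq hY hw]
  rfl

lemma MergeStep.le {Q P : Finpartition (univ : Finset V)} (h : MergeStep Q P) : Q ≤ P := by
  obtain ⟨A, -, B, -, -, hP⟩ := h
  intro X hX
  rw [hP]
  by_cases hXA : X = A
  · exact ⟨A ∪ B, mem_insert_self _ _, hXA ▸ subset_union_left⟩
  by_cases hXB : X = B
  · exact ⟨A ∪ B, mem_insert_self _ _, hXB ▸ subset_union_right⟩
  exact ⟨X, mem_insert_of_mem (mem_erase.2 ⟨hXB, mem_erase.2 ⟨hXA, hX⟩⟩), le_rfl⟩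

/-- Coarsening a partition can only merge components of the red graph, since a pair of parts
stays inhomogeneous when the parts grow. -/
lemma redSetoid_mono (G : SimpleGraph V) : Monotone (redSetoid G) := by
  intro Q P hQP
  have hpart (X : {X : Finset V // X ∈ Q.parts}) : ∃ Y, ∀ v ∈ X.1, partOf P v = Y := by
    obtain ⟨Y, hY, hXY⟩ := hQP X.2
    exact ⟨⟨Y, hY⟩, fun v hv => partOf_eq hY (hXY hv)⟩
  choose f hf using hpart
  have hsub (X : {X : Finset V // X ∈ Q.parts}) : X.1 ⊆ (f X).1 := fun v hv =>
    hf X v hv ▸ P.mem_part_self.2 (mem_univ v)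
  have hadj (X Y : {X : Finset V // X ∈ Q.parts}) (h : (redGraph G Q).Adj X Y) :
      Relation.ReflTransGen (redGraph G P).Adj (f X) (f Y) := by
    by_cases hXY : f X = f Y
    · exact hXY ▸ .refl
    · exact .single ⟨hXY, h.2.mono (hsub X) (hsub Y)⟩
  refine Setoid.le_def.2 fun {v w} h => ?_
  have hfv (u : V) : f (partOf Q u) = partOf P u :=
    (hf _ u (Q.mem_part_self.2 (mem_univ u))).symm
  change (redGraph G P).Reachable (partOf P v) (partOf P w)
  rw [← hfv, ← hfv, SimpleGraph.reachable_iff_reflTransGen]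
  exact (SimpleGraph.reachable_iff_reflTransGen _ _).1 h |>.lift' f hadj

lemma exists_mergeStep {Q : Finpartition (univ : Finset V)} {A B : Finset V}
    (hA : A ∈ Q.parts) (hB : B ∈ Q.parts) (hAB : A ≠ B) : ∃ P, MergeStep Q P := by
  set rest := (Q.parts.erase A).erase B
  have hrest : rest ⊆ Q.parts := (erase_subset _ _).trans (erase_subset _ _)
  have hQ : Q.parts = insert A (insert B rest) := by
    rw [insert_erase (mem_erase.2 ⟨hAB.symm, hB⟩), insert_erase hA]
  have hdisj : Disjoint (rest.sup id) (A ∪ B) := by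
    refine Finset.disjoint_sup_left.2 fun C hC => disjoint_union_right.2 ⟨?_, ?_⟩
    · exact Q.disjoint (hrest hC) hA (mem_erase.1 (mem_erase.1 hC).2).1
    · exact Q.disjoint (hrest hC) hB (mem_erase.1 hC).1
  have hsup : rest.sup id ⊔ (A ∪ B) = univ := by
    rw [← Q.sup_parts, hQ, sup_insert, sup_insert]
    simp only [id, sup_eq_union]
    ac_rfl
  have hne : A ∪ B ≠ ⊥ := (union_nonempty.2 (.inl (Q.nonempty_of_mem_parts hA))).ne_empty
  exact ⟨(Q.ofSubset hrest rfl).extend hne hdisj hsup, A, hA, B, hB, hAB, rfl⟩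

lemma exists_mergeStep_chain [Nonempty V] (Q : Finpartition (univ : Finset V)) :
    ∃ l : List (Finpartition (univ : Finset V)), l.head? = some Q ∧
      (∃ P, l.getLast? = some P ∧ P.parts = {univ}) ∧ l.IsChain MergeStep := by
  induction hQ : Q.parts.card using Nat.strong_induction_on generalizing Q with
  | _ n ih =>
    obtain hn | hn := le_or_gt n 1
    · have hpos := (Q.parts_nonempty univ_nonempty.ne_empty).card_pos
      obtain ⟨X, hX⟩ := card_eq_one.1 (show Q.parts.card = 1 by omega)
      have hXuniv : X = univ := by simpa [hX] using Q.sup_parts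
      exact ⟨[Q], rfl, ⟨Q, rfl, hXuniv ▸ hX⟩, .singleton Q⟩
    obtain ⟨A, hA, B, hB, hAB⟩ := one_lt_card.1 (hQ ▸ hn)
    obtain ⟨P, hQP⟩ := exists_mergeStep hA hB hAB
    have hcard : P.parts.card < n := by
      obtain ⟨A', hA', B', hB', hAB', hP⟩ := hQP
      have := card_erase_of_mem (mem_erase.2 ⟨hAB'.symm, hB'⟩)
      have := card_erase_of_mem hA'
      have := card_insert_le (A' ∪ B') ((Q.parts.erase A').erase B')
      rw [hP]
      omega
    obtain ⟨_ | ⟨P', l⟩, hhead, ⟨R, hlast, hR⟩, hchain⟩ := ih _ hcard P rfl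
    · simp at hhead
    · obtain rfl : P' = P := Option.some_injective _ hhead
      exact ⟨Q :: P' :: l, rfl, ⟨R, by rwa [List.getLast?_cons_cons], hR⟩,
        List.isChain_cons_cons.2 ⟨hQP, hchain⟩⟩

lemma exists_isPartitionSeq [Nonempty V] :
    ∃ l : List (Finpartition (univ : Finset V)), IsPartitionSeq l := by
  obtain ⟨l, hhead, hlast, hchain⟩ := exists_mergeStep_chain (⊥ : Finpartition (univ : Finset V))
  refine ⟨l, ⟨⊥, hhead, fun X hX => ?_⟩, hlast, hchain⟩
  rw [Finpartition.parts_bot] at hX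
  obtain ⟨v, -, rfl⟩ := mem_map.1 hX
  exact card_singleton v

lemma IsPartitionSeq.monotone_get {l : List (Finpartition (univ : Finset V))}
    (hl : IsPartitionSeq l) : Monotone l.get :=
  (hl.2.2.imp fun _ _ => MergeStep.le).sortedLE.monotone_get

lemma exists_isPartitionSeq_maxRedComponentSize_le_ctww [Nonempty V] (G : SimpleGraph V) :
    ∃ l, IsPartitionSeq l ∧ ∀ P ∈ l, maxRedComponentSize G P ≤ ctww G := by
  obtain ⟨l, hl⟩ := exists_isPartitionSeq (V := V)
  have hne : {k | ∃ l, IsPartitionSeq l ∧ ∀ P ∈ l, maxRedComponentSize G P ≤ k}.Nonempty :=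
    ⟨_, l, hl, fun P hP => List.le_sum_of_mem (List.mem_map_of_mem hP)⟩
  exact Nat.sInf_mem hne

section Ord
variable [LinearOrder V]

lemma coe_conv_subset {X : Finset V} {S : Set V} (hS : S.OrdConnected) (hX : ↑X ⊆ S) :
    ↑(conv X) ⊆ S := by
  intro v hv
  obtain ⟨-, ⟨a, ha, hav⟩, ⟨b, hb, hvb⟩⟩ := mem_filter.1 hv
  exact hS.out (hX ha) (hX hb) ⟨hav, hvb⟩

lemma redClosedNbhd_subset {G : SimpleGraph V} {P : Finpartition (univ : Finset V)}
    {X : Finset V} (hX : X ∈ P.parts) {v : V} (hv : v ∈ X) :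
    ↑(redClosedNbhd G P X) ⊆ {w | redSetoid G P v w} := by
  intro w hw
  obtain hwX | hw := mem_union.1 hw
  · exact (redSetoid_iff hX hX hv hwX).2 .rfl
  · obtain ⟨Y, hY, hwY⟩ := mem_biUnion.1 hw
    obtain ⟨hY, hYX, hXY⟩ := mem_filter.1 hY
    exact (redSetoid_iff hX hY hv hwY).2 (SimpleGraph.Adj.reachable ⟨fun h => hYX
      (congrArg Subtype.val h).symm, hXY⟩)

/-- `Y` and the red closed neighbourhood of `X` lie in the intervals of their red components,
and these intervals meet. -/
lemma reachable_of_conflict {G : SimpleGraph V} {P : Finpartition (univ : Finset V)}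
    (hconv : ∀ v, {w | redSetoid G P v w}.OrdConnected) {X Y : Finset V} (hX : X ∈ P.parts)
    (hY : Y ∈ P.parts) (h : Conflict Y (redClosedNbhd G P X)) :
    (redGraph G P).Reachable ⟨X, hX⟩ ⟨Y, hY⟩ := by
  obtain ⟨v, hv⟩ := P.nonempty_of_mem_parts hX
  obtain ⟨y, hy⟩ := P.nonempty_of_mem_parts hY
  obtain ⟨z, hz⟩ := h
  obtain ⟨hzY, hzX⟩ := mem_inter.1 hz
  have hvz : redSetoid G P v z := coe_conv_subset (hconv v) (redClosedNbhd_subset hX hv) hzX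
  have hyz : redSetoid G P y z := coe_conv_subset (hconv y)
    (fun w hw => (redSetoid_iff hY hY hy hw).2 .rfl) hzY
  exact (redSetoid_iff hX hY hv hy).1 ((redSetoid G P).trans hvz ((redSetoid G P).symm hyz))

lemma stretchPart_le {G : SimpleGraph V} {P : Finpartition (univ : Finset V)}
    (hconv : ∀ v, {w | redSetoid G P v w}.OrdConnected) {X : Finset V} (hX : X ∈ P.parts) :
    stretchPart G P X ≤ maxRedComponentSize G P - 1 := by
  let comp := (univ.filter fun Y => (redGraph G P).Reachable ⟨X, hX⟩ Y).map
    (Function.Embedding.subtype _)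
  have hsub : (P.parts.erase X).filter (fun Y => Conflict Y (redClosedNbhd G P X)) ⊆
      comp.erase X := by
    intro Y hY
    obtain ⟨hYX, hYP⟩ := mem_erase.1 (mem_filter.1 hY).1
    have hreach := reachable_of_conflict hconv hX hYP (mem_filter.1 hY).2
    exact mem_erase.2 ⟨hYX, mem_map.2 ⟨⟨Y, hYP⟩, mem_filter.2 ⟨mem_univ _, hreach⟩, rfl⟩⟩
  have hX_mem : X ∈ comp := mem_map.2 ⟨⟨X, hX⟩, mem_filter.2 ⟨mem_univ _, .rfl⟩, rfl⟩
  have hcomp : comp.card ≤ maxRedComponentSize G P := by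
    rw [card_map]
    exact le_sup (f := fun X => (univ.filter fun Y => (redGraph G P).Reachable X Y).card)
      (mem_univ _)
  calc stretchPart G P X ≤ (comp.erase X).card := card_le_card hsub
    _ = comp.card - 1 := card_erase_of_mem hX_mem
    _ ≤ maxRedComponentSize G P - 1 := Nat.sub_le_sub_right hcomp 1

lemma stretchPartition_le {G : SimpleGraph V} {P : Finpartition (univ : Finset V)}
    (hconv : ∀ v, {w | redSetoid G P v w}.OrdConnected) :
    stretchPartition G P ≤ maxRedComponentSize G P - 1 :=
  Finset.sup_le fun _ hX => stretchPart_le hconv hX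

end Ord

/-- For every finite simple graph `G` with at least one vertex,
the stretch-width of `G` is at most its component twin-width minus 1. -/
theorem stw_le_ctww_sub_one {V : Type} [Fintype V] [DecidableEq V] [Nonempty V]
    (G : SimpleGraph V) :
    stw G ≤ ctww G - 1 := by
  obtain ⟨l, hl, hbound⟩ := exists_isPartitionSeq_maxRedComponentSize_le_ctww G
  obtain ⟨L, hL⟩ := Setoid.exists_linearOrder_ordConnected (fun i => redSetoid G (l.get i))
    ((redSetoid_mono G).comp hl.monotone_get)
  calc stw G ≤ stwOrd G := Nat.sInf_le ⟨L, rfl⟩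
    _ ≤ ctww G - 1 := Nat.sInf_le ⟨l, hl, fun P hP => ?_⟩
  obtain ⟨i, rfl⟩ := List.mem_iff_get.1 hP
  exact (stretchPartition_le (hL i)).trans (Nat.sub_le_sub_right (hbound _ hP) 1)

end StretchPaper
end
end

section
/- For every integer h ≥ 1 and every vertex v of the graph A_3^h, the degree d of v satisfies (3^{h−1} − 1)/2 ≤ d ≤ 3^{h−1} − 1. -/
open Finset

noncomputable section
open scoped Classical
set_option linter.unusedSectionVars false
set_option linter.unusedVariables false

namespace StretchPaper

/-! ### Partitions, red graphs, component twin-width and stretch-width of graphs -/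

variable {V : Type} [Fintype V] [DecidableEq V]

/-! ### Symmetric 0,1-matrices: stretch-width and divisions -/

variable {n : ℕ}

/-! The neighbours of `v` in `A_3^h` split by level: at level `l` they are the `u` whose
`3^l`-block lies three blocks away from that of `v`. Distinct levels give disjoint sets, because
blocks three apart at level `l` are at most one apart at every coarser level. At level `l` there
are at most two such blocks, of `3^l` vertices each, one on either side of `v`. At the top level
`h - 1` there are only three blocks, so neither exists; at every lower level there are at least
nine, so at least one exists. Summing `3^l` and `2 * 3^l` over `l < h - 1` gives the bounds. -/

def BlocksThreeApart (q a b : ℕ) : Prop :=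
  a / q = b / q + 3 ∨ b / q = a / q + 3

theorem BlocksThreeApart.ne {q a b : ℕ} (hab : BlocksThreeApart q a b) : a ≠ b := by
  rintro rfl
  rcases hab with h | h <;> omega

theorem BlocksThreeApart.not_mul {q a b m : ℕ} (hm : 3 ≤ m) (hab : BlocksThreeApart q a b) :
    ¬ BlocksThreeApart (q * m) a b := by
  have close : ∀ x, x / m ≤ (x + 3) / m ∧ (x + 3) / m ≤ x / m + 1 := fun x =>
    ⟨Nat.div_le_div_right (by omega),
      (Nat.div_le_div_right (by omega)).trans_eq (Nat.add_div_right x (by omega))⟩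
  unfold BlocksThreeApart at *
  rw [← Nat.div_div_eq_div_mul, ← Nat.div_div_eq_div_mul]
  rcases hab with h | h
  · rw [h]; have := close (b / q); omega
  · rw [h]; have := close (a / q); omega

theorem card_filter_range_div_eq (q M c : ℕ) :
    #{u ∈ range (M * q) | u / q = c} = if c < M then q else 0 := by
  rcases Nat.eq_zero_or_pos q with rfl | hq
  · simp
  split_ifs with hc
  · have hslab : {u ∈ range (M * q) | u / q = c} = Ico (c * q) (c * q + q) := by
      ext u
      have hcM : c * q + q ≤ M * q := by simpa [add_one_mul] using Nat.mul_le_mul_right q hc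
      simp only [mem_filter, mem_range, mem_Ico, Nat.div_eq_iff hq]
      constructor
      · rintro ⟨-, h₁, h₂⟩; omega
      · rintro ⟨h₁, h₂⟩; omega
    simp [hslab]
  · refine card_eq_zero.mpr (filter_eq_empty_iff.mpr fun u hu hc' => hc ?_)
    rw [← hc']
    exact Nat.div_lt_of_lt_mul (by simpa [mul_comm] using hu)

theorem card_filter_blocksThreeApart {q M v : ℕ} (hv : v < M * q) :
    #{u ∈ range (M * q) | BlocksThreeApart q v u} =
      (if v / q + 3 < M then q else 0) + (if 3 ≤ v / q then q else 0) := by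
  have hvM : v / q < M := Nat.div_lt_of_lt_mul (by rwa [mul_comm])
  have hsplit : {u ∈ range (M * q) | BlocksThreeApart q v u} =
      {u ∈ range (M * q) | v / q = u / q + 3} ∪ {u ∈ range (M * q) | u / q = v / q + 3} := by
    ext u; simp only [mem_union, mem_filter]; unfold BlocksThreeApart; tauto
  rw [hsplit]
  generalize v / q = c at *
  have hdisj :
      Disjoint {u ∈ range (M * q) | c = u / q + 3} {u ∈ range (M * q) | u / q = c + 3} :=
    disjoint_filter.mpr fun u _ h₁ h₂ => by omega
  have hbelow : #{u ∈ range (M * q) | c = u / q + 3} = if 3 ≤ c then q else 0 := by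
    split_ifs with h3
    · rw [filter_congr (q := (· / q = c - 3)) (fun u _ => by omega),
        card_filter_range_div_eq, if_pos (by omega)]
    · exact card_eq_zero.mpr (filter_eq_empty_iff.mpr fun u _ h => h3 (h ▸ Nat.le_add_left 3 _))
  rw [card_union_of_disjoint hdisj, hbelow, card_filter_range_div_eq, add_comm]

theorem card_filter_blocksThreeApart_pow {h l v : ℕ} (hl : l ≤ h) (hv : v < 3 ^ h) :
    #{u ∈ range (3 ^ h) | BlocksThreeApart (3 ^ l) v u} =
      (if v / 3 ^ l + 3 < 3 ^ (h - l) then 3 ^ l else 0) +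
        (if 3 ≤ v / 3 ^ l then 3 ^ l else 0) := by
  rw [← Nat.pow_sub_mul_pow 3 hl] at hv ⊢
  exact card_filter_blocksThreeApart hv

theorem card_filter_blocksThreeApart_pow_le {h l v : ℕ} (hl : l ≤ h) (hv : v < 3 ^ h) :
    #{u ∈ range (3 ^ h) | BlocksThreeApart (3 ^ l) v u} ≤ 2 * 3 ^ l := by
  rw [card_filter_blocksThreeApart_pow hl hv]
  split_ifs <;> omega

theorem card_filter_blocksThreeApart_pow_top {k v : ℕ} (hv : v < 3 ^ (k + 1)) :
    #{u ∈ range (3 ^ (k + 1)) | BlocksThreeApart (3 ^ k) v u} = 0 := by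
  have hv3 : v / 3 ^ k < 3 := Nat.div_lt_of_lt_mul (by rwa [← pow_succ])
  rw [card_filter_blocksThreeApart_pow (h := k + 1) (by omega) hv, Nat.add_sub_cancel_left,
    pow_one]
  generalize v / 3 ^ k = c at hv3 ⊢
  split_ifs <;> omega

theorem pow_le_card_filter_blocksThreeApart_pow {k l v : ℕ} (hl : l < k)
    (hv : v < 3 ^ (k + 1)) :
    3 ^ l ≤ #{u ∈ range (3 ^ (k + 1)) | BlocksThreeApart (3 ^ l) v u} := by
  have h9 : 3 ^ 2 ≤ 3 ^ (k + 1 - l) := Nat.pow_le_pow_right (by norm_num) (by omega)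
  rw [card_filter_blocksThreeApart_pow (by omega) hv]
  have hq : 0 < 3 ^ l := by positivity
  generalize v / 3 ^ l = c
  split_ifs <;> omega

theorem card_filter_univ_fin_eq_card_filter_range (N : ℕ) (p : ℕ → Prop) [DecidablePred p]
    [DecidablePred fun u : Fin N => p u] : #{u : Fin N | p u} = #{x ∈ range N | p x} := by
  rw [← card_map Fin.valEmbedding, ← Nat.Iio_eq_range, ← Fin.map_valEmbedding_univ, filter_map]
  congr

theorem Agraph_adj_iff {h : ℕ} {u v : Fin (3 ^ h)} :
    (Agraph h).Adj u v ↔ ∃ l < h, BlocksThreeApart (3 ^ l) u v :=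
  ⟨fun huv => huv.2, fun ⟨l, hl, huv⟩ => ⟨Fin.ne_of_val_ne huv.ne, l, hl, huv⟩⟩

open Function in
theorem pairwise_disjoint_filter_blocksThreeApart (s : Finset ℕ) (v : ℕ) :
    Pairwise (Disjoint on fun l => {u ∈ s | BlocksThreeApart (3 ^ l) v u}) := by
  intro l l' hne
  wlog hlt : l < l' generalizing l l'
  · exact (this hne.symm (by omega)).symm
  refine disjoint_filter.mpr fun u _ hu hu' => hu.not_mul (m := 3 ^ (l' - l)) ?_ ?_
  · exact Nat.le_self_pow (by omega) 3
  · rwa [← pow_add, Nat.add_sub_cancel' hlt.le]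

theorem card_Agraph_adj_eq_sum (h : ℕ) (v : Fin (3 ^ h)) :
    #{u | (Agraph h).Adj v u} =
      ∑ l ∈ range h, #{u ∈ range (3 ^ h) | BlocksThreeApart (3 ^ l) v u} := by
  have hunion : {u ∈ range (3 ^ h) | ∃ l < h, BlocksThreeApart (3 ^ l) v u} =
      (range h).biUnion fun l => {u ∈ range (3 ^ h) | BlocksThreeApart (3 ^ l) v u} := by
    ext u
    simp only [mem_filter, mem_biUnion, mem_range]
    exact ⟨fun ⟨hu, l, hl, huv⟩ => ⟨l, hl, hu, huv⟩, fun ⟨l, hl, hu, huv⟩ => ⟨hu, l, hl, huv⟩⟩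
  rw [filter_congr fun u _ => Agraph_adj_iff,
    card_filter_univ_fin_eq_card_filter_range _ fun x => ∃ l < h, BlocksThreeApart (3 ^ l) v x,
    hunion,
    card_biUnion ((pairwise_disjoint_filter_blocksThreeApart _ v).set_pairwise _)]

theorem Agraph_degree_bounds_general (h : ℕ) (v : Fin (3 ^ h)) :
    (3 ^ (h - 1) - 1) / 2 ≤ (Finset.univ.filter fun u => (Agraph h).Adj v u).card ∧
    (Finset.univ.filter fun u => (Agraph h).Adj v u).card ≤ 3 ^ (h - 1) - 1 := by
  rw [card_Agraph_adj_eq_sum]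
  cases h with
  | zero => simp
  | succ k =>
    rw [sum_range_succ, card_filter_blocksThreeApart_pow_top v.2, add_zero, Nat.add_sub_cancel]
    have hgeom : ∑ l ∈ range k, 3 ^ l = (3 ^ k - 1) / 2 := by
      simpa using Nat.geomSum_eq (m := 3) (by norm_num) k
    constructor
    · calc (3 ^ k - 1) / 2 = ∑ l ∈ range k, 3 ^ l := hgeom.symm
        _ ≤ _ := sum_le_sum fun l hl =>
            pow_le_card_filter_blocksThreeApart_pow (mem_range.mp hl) v.2
    · calc _ ≤ ∑ l ∈ range k, 2 * 3 ^ l := sum_le_sum fun l hl =>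
            card_filter_blocksThreeApart_pow_le (by simp at hl; omega) v.2
        _ = 2 * ((3 ^ k - 1) / 2) := by rw [← mul_sum, hgeom]
        _ ≤ 3 ^ k - 1 := Nat.mul_div_le _ _

/-- Every vertex of `A_3^h` has degree between `(3^{h−1} − 1)/2` and `3^{h−1} − 1`. -/
theorem Agraph_degree_bounds (h : ℕ) (hh : 1 ≤ h) (v : Fin (3 ^ h)) :
    (3 ^ (h - 1) - 1) / 2 ≤ (Finset.univ.filter fun u => (Agraph h).Adj v u).card ∧
    (Finset.univ.filter fun u => (Agraph h).Adj v u).card ≤ 3 ^ (h - 1) - 1 :=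
  Agraph_degree_bounds_general h v

end StretchPaper
end
end
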